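/- The map F(x,y) = (φ(y) + ψ(x), χ(y) − ω(x)) from ℝ² to ℝ² is injective, where φ(y) = Σ_{i=0}^{m1} a_i y^{2i+1}, ψ(x) = Σ_{i=0}^{m2} b_i x^{2i+1}, χ(y) = Σ_{i=0}^{m3} c_i y^{2i+1}, ω(x) = Σ_{i=0}^{m2} d_i x^{2i+1}, with all coefficients nonnegative, b_0 c_0 + a_0 d_0 > 0, a_{m1} > 0, b_{m2} > 0, d_{m2} > 0, and m1 > max{m2, m3} ≥ 0. -/

import Mathlib

/-!
If `x < x'` then `ψ x ≤ ψ x'`, so equal first components force `φ y ≥ φ y'`, hence `y ≥ y'` and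
`χ y ≥ χ y'`; together with `ω x < ω x'` the second components then differ. So equal images have
equal `x`, and then equal `y` because `φ` is injective. Each of `φ, ψ, χ, ω` is an odd polynomial
with nonnegative coefficients, hence monotone, and strictly so once a coefficient is positive.
-/

open Finset

section OddPolynomial

variable (s : Finset ℕ) (e : ℕ → ℝ)

theorem monotone_sum_mul_pow_odd (he : ∀ i ∈ s, 0 ≤ e i) :
    Monotone fun x : ℝ => ∑ i ∈ s, e i * x ^ (2 * i + 1) := fun _ _ hxy =>
  sum_le_sum fun i hi =>
    mul_le_mul_of_nonneg_left ((odd_two_mul_add_one i).strictMono_pow.monotone hxy) (he i hi)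

theorem strictMono_sum_mul_pow_odd (he : ∀ i ∈ s, 0 ≤ e i) {j : ℕ} (hj : j ∈ s)
    (hej : 0 < e j) : StrictMono fun x : ℝ => ∑ i ∈ s, e i * x ^ (2 * i + 1) := by
  simp only [← add_sum_erase s _ hj]
  exact ((odd_two_mul_add_one j).strictMono_pow.const_mul hej).add_monotone
    (monotone_sum_mul_pow_odd _ e fun i hi => he i (mem_of_mem_erase hi))

end OddPolynomial

theorem injective_add_sub_of_strictMono_of_monotone {α β : Type*} [LinearOrder α]
    [AddCommGroup β] [LinearOrder β] [IsOrderedAddMonoid β] {φ ψ χ ω : α → β}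
    (hφ : StrictMono φ) (hψ : Monotone ψ) (hχ : Monotone χ) (hω : StrictMono ω) :
    Function.Injective fun p : α × α => (φ p.2 + ψ p.1, χ p.2 - ω p.1) := by
  have not_lt_of_eq : ∀ p q : α × α, φ p.2 + ψ p.1 = φ q.2 + ψ q.1 →
      χ p.2 - ω p.1 = χ q.2 - ω q.1 → ¬ p.1 < q.1 := by
    intro p q h₁ h₂ hx
    have hy : q.2 ≤ p.2 := by
      refine hφ.le_iff_le.mp (le_of_add_le_add_right (a := ψ p.1) ?_)
      calc φ q.2 + ψ p.1 ≤ φ q.2 + ψ q.1 := add_le_add_right (hψ hx.le) _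
        _ = φ p.2 + ψ p.1 := h₁.symm
    exact ((sub_le_sub_right (hχ hy) _).trans_lt (sub_lt_sub_left (hω hx) _)).ne h₂.symm
  rintro p q h
  obtain ⟨h₁, h₂⟩ := Prod.mk.inj h
  have hx : p.1 = q.1 :=
    le_antisymm (not_lt.mp (not_lt_of_eq q p h₁.symm h₂.symm))
      (not_lt.mp (not_lt_of_eq p q h₁ h₂))
  rw [hx] at h₁
  exact Prod.ext hx (hφ.injective (add_right_cancel h₁))

theorem example2_injective_general (m1 m2 m3 : ℕ)
    (a b c d : ℕ → ℝ)
    (ha : ∀ i ≤ m1, 0 ≤ a i) (hb : ∀ i ≤ m2, 0 ≤ b i)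
    (hc : ∀ i ≤ m3, 0 ≤ c i) (hd : ∀ i ≤ m2, 0 ≤ d i)
    (ham1 : 0 < a m1) (hdm2 : 0 < d m2) :
    Function.Injective (fun p : ℝ × ℝ =>
      (∑ i ∈ range (m1 + 1), a i * p.2 ^ (2 * i + 1) +
         ∑ i ∈ range (m2 + 1), b i * p.1 ^ (2 * i + 1),
       ∑ i ∈ range (m3 + 1), c i * p.2 ^ (2 * i + 1) -
         ∑ i ∈ range (m2 + 1), d i * p.1 ^ (2 * i + 1))) := by
  have nonneg {m : ℕ} {e : ℕ → ℝ} (he : ∀ i ≤ m, 0 ≤ e i) : ∀ i ∈ range (m + 1), 0 ≤ e i :=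
    fun i hi => he i (Nat.lt_succ_iff.mp (mem_range.mp hi))
  exact injective_add_sub_of_strictMono_of_monotone
    (strictMono_sum_mul_pow_odd _ a (nonneg ha) (self_mem_range_succ m1) ham1)
    (monotone_sum_mul_pow_odd _ b (nonneg hb))
    (monotone_sum_mul_pow_odd _ c (nonneg hc))
    (strictMono_sum_mul_pow_odd _ d (nonneg hd) (self_mem_range_succ m2) hdm2)

theorem example2_injective (m1 m2 m3 : ℕ) (hm : max m2 m3 < m1)
    (a b c d : ℕ → ℝ)
    (ha : ∀ i ≤ m1, 0 ≤ a i) (hb : ∀ i ≤ m2, 0 ≤ b i)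
    (hc : ∀ i ≤ m3, 0 ≤ c i) (hd : ∀ i ≤ m2, 0 ≤ d i)
    (hpos : 0 < b 0 * c 0 + a 0 * d 0)
    (ham1 : 0 < a m1) (hbm2 : 0 < b m2) (hdm2 : 0 < d m2) :
    Function.Injective (fun p : ℝ × ℝ =>
      (∑ i ∈ range (m1 + 1), a i * p.2 ^ (2 * i + 1) +
         ∑ i ∈ range (m2 + 1), b i * p.1 ^ (2 * i + 1),
       ∑ i ∈ range (m3 + 1), c i * p.2 ^ (2 * i + 1) -
         ∑ i ∈ range (m2 + 1), d i * p.1 ^ (2 * i + 1))) :=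
  example2_injective_general m1 m2 m3 a b c d ha hb hc hd ham1 hdm2
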